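/- arXiv:1310.5093 — 7 statements merged into one kernel-verified Lean document; each statement's English description precedes it below -/
import Mathlib

section
/- Let n ≥ 1 be an integer and let p be a real polynomial of degree m. Then for every x ≥ 0 the series Σ_{k=0}^∞ p(k/n)·v_{k,n}(x) converges absolutely, and (V_n p)(x) = Σ_{r=0}^{m} θ_r^{(n)}(x)·p^{(r)}(x), where p^{(r)} denotes the r-th derivative of p. In other words, on polynomials the Baskakov operator admits the differential representation V_n = Σ_{r≥0} θ_r^{(n)} D^r with the coefficients θ_r^{(n)} given by the stated recurrence. -/
open Filter Topology Finset

/-- Baskakov basis functions `v_{k,n}(x) = C(n+k-1, k) x^k (1+x)^{-(n+k)}`. -/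
noncomputable def baskakovBasis (n k : ℕ) (x : ℝ) : ℝ :=
  (Nat.choose (n + k - 1) k : ℝ) * x ^ k / (1 + x) ^ (n + k)

/-- Baskakov operator `(V_n f)(x) = Σ_{k≥0} f(k/n) v_{k,n}(x)`. -/
noncomputable def baskakov (n : ℕ) (f : ℝ → ℝ) (x : ℝ) : ℝ :=
  ∑' k : ℕ, f ((k : ℝ) / n) * baskakovBasis n k x

/-- Polynomials θ_r^{(n)}: θ_0 = 1, θ_1 = 0 and
`n (r+1) θ_{r+1} = X (θ_r' + θ_{r-1})` for r ≥ 1, with X = x(1+x). -/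
noncomputable def theta (n : ℕ) : ℕ → ℝ → ℝ
  | 0 => fun _ => 1
  | 1 => fun _ => 0
  | r + 2 => fun x =>
      x * (1 + x) * (deriv (theta n (r + 1)) x + theta n r x) / (n * (r + 2))

/-- Polynomials η_r^{(n)}: η_0 = 1, η_1 = 0 and
`(n+r)(r+1) η_{r+1} = -r(1+2x) η_r - X η_{r-1}` for r ≥ 1, with X = x(1+x). -/
noncomputable def eta (n : ℕ) : ℕ → ℝ → ℝ
  | 0 => fun _ => 1
  | 1 => fun _ => 0
  | r + 2 => fun x =>
      (-((r + 1 : ℝ) * (1 + 2 * x) * eta n (r + 1) x) - x * (1 + x) * eta n r x) /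
        (((n : ℝ) + (r + 1)) * (r + 2))

/-- Rising factorial `(n)_r = n (n+1) ⋯ (n+r-1)`. -/
def risingFactorial (n r : ℕ) : ℕ := ∏ i ∈ Finset.range r, (n + i)

/-!
Write `μ_r(x) = Σ_k (k/n - x)^r / r! · v_{k,n}(x)`. Taylor's formula at `x` turns `V_n p (x)`
into `Σ_r p^{(r)}(x) μ_r(x)`, so it suffices that `μ_r = θ_r`. For `r = 0, 1` this follows from
the negative binomial series. Since `x(1+x) v_{k,n}' = (k - n x) v_{k,n}`, differentiating the
series of `μ_{r+1}` termwise gives `n (r+2) μ_{r+2} = x(1+x) (μ_{r+1}' + μ_r)`, the recurrence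
of `θ`. Termwise differentiation is legitimate on `(-1/3, R)`: there `|y| ≤ c (1+y)` with
`c = R/(R+1) < 1`, so the terms and their derivatives are `O(k^m c^k)`.
-/

open scoped Nat

open Polynomial in
theorem Polynomial.eval_eq_sum_range_iterate_derivative {R : Type*} [Field R] [CharZero R]
    (p : R[X]) (x y : R) :
    p.eval y =
      ∑ r ∈ range (p.natDegree + 1), (derivative^[r] p).eval x * ((y - x) ^ r / r !) := by
  rw [← taylor_eval_sub (r := x),
    eval_eq_sum_range' (n := p.natDegree + 1) (by rw [natDegree_taylor]; omega)]
  refine sum_congr rfl fun r _ => ?_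
  rw [taylor_coeff, ← factorial_smul_hasseDeriv, LinearMap.smul_apply, eval_smul, nsmul_eq_mul]
  field_simp [r.factorial_ne_zero]

noncomputable def baskakovBasisDeriv (n k : ℕ) (x : ℝ) : ℝ :=
  (Nat.choose (n + k - 1) k : ℝ) * (k * x ^ (k - 1) - n * x ^ k) / (1 + x) ^ (n + k + 1)

lemma hasDerivAt_baskakovBasis (n k : ℕ) {x : ℝ} (hx : -1 < x) :
    HasDerivAt (baskakovBasis n k) (baskakovBasisDeriv n k x) x := by
  have hx' : 1 + x ≠ 0 := by linarith
  have hden : HasDerivAt (fun y : ℝ => (1 + y) ^ (n + k))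
      ((n + k) * (1 + x) ^ (n + k) / (1 + x)) x := by
    refine (((hasDerivAt_id x).const_add 1).fun_pow (n + k)).congr_deriv ?_
    rw [← Nat.cast_add, id]
    rcases n + k with _ | m
    · simp
    · rw [Nat.add_sub_cancel, pow_succ]; field_simp
  have hnum := (hasDerivAt_pow k x).const_mul ((n + k - 1).choose k : ℝ)
  refine (hnum.div hden (pow_ne_zero _ hx')).congr_deriv ?_
  rw [baskakovBasisDeriv]
  rcases k with _ | k
  · field_simp; ring
  · simp only [Nat.add_sub_cancel]
    field_simp
    ring

lemma mul_baskakovBasisDeriv (n k : ℕ) {x : ℝ} (hx : -1 < x) :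
    x * (1 + x) * baskakovBasisDeriv n k x = (k - n * x) * baskakovBasis n k x := by
  have hx' : 1 + x ≠ 0 := by linarith
  rw [baskakovBasisDeriv, baskakovBasis]
  rcases k with _ | k
  · field_simp; ring
  · simp only [Nat.add_sub_cancel]
    field_simp
    ring

lemma Nat.choose_add_sub_one_eq {n : ℕ} (hn : 1 ≤ n) (k : ℕ) :
    (n + k - 1).choose k = (k + (n - 1)).choose (n - 1) := by
  rw [show n + k - 1 = k + (n - 1) by omega, Nat.choose_symm_add]

lemma baskakovBasis_eq_mul_geometric {n : ℕ} (hn : 1 ≤ n) {x : ℝ} (hx : 1 + x ≠ 0)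
    (k : ℕ) :
    baskakovBasis n k x = (k + (n - 1)).choose (n - 1) * (x / (1 + x)) ^ k / (1 + x) ^ n := by
  rw [baskakovBasis, Nat.choose_add_sub_one_eq hn k, div_pow, pow_add]
  field_simp

lemma hasSum_baskakovBasis {n : ℕ} (hn : 1 ≤ n) {x : ℝ} (hx : -1 / 2 < x) :
    HasSum (fun k => baskakovBasis n k x) 1 := by
  have hx' : 0 < 1 + x := by linarith
  have hq : ‖x / (1 + x)‖ < 1 := by
    rw [Real.norm_eq_abs, abs_div, abs_of_pos hx', div_lt_one hx', abs_lt]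
    constructor <;> linarith
  have hsum := (hasSum_choose_mul_geometric_of_norm_lt_one (n - 1) hq).div_const ((1 + x) ^ n)
  have hval : 1 / (1 - x / (1 + x)) ^ (n - 1 + 1) / (1 + x) ^ n = 1 := by
    have h1 : 1 - x / (1 + x) = (1 + x)⁻¹ := by field_simp; ring
    rw [Nat.sub_add_cancel hn, h1, inv_pow]
    field_simp
  rw [hval] at hsum
  simpa only [baskakovBasis_eq_mul_geometric hn hx'.ne'] using hsum

lemma add_one_mul_baskakovBasis_succ (n k : ℕ) (x : ℝ) :
    (k + 1) * baskakovBasis n (k + 1) x = n * x * baskakovBasis (n + 1) k x := by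
  have hchoose : ((n + k).choose (k + 1) : ℝ) * (k + 1) = (n + k).choose k * n := by
    have := Nat.choose_succ_right_eq (n + k) k
    rw [Nat.add_sub_cancel] at this
    exact_mod_cast this
  rw [baskakovBasis, baskakovBasis, show n + (k + 1) - 1 = n + k by omega,
    show n + 1 + k - 1 = n + k by omega, show n + 1 + k = n + (k + 1) by omega]
  linear_combination x ^ (k + 1) / (1 + x) ^ (n + (k + 1)) * hchoose

lemma hasSum_natCast_mul_baskakovBasis {n : ℕ} (hn : 1 ≤ n) {x : ℝ} (hx : -1 / 2 < x) :
    HasSum (fun k : ℕ => k * baskakovBasis n k x) (n * x) := by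
  rw [← hasSum_nat_add_iff' 1]
  simpa [add_one_mul_baskakovBasis_succ] using
    (hasSum_baskakovBasis (Nat.le_succ_of_le hn) hx).mul_left (n * x)

noncomputable def centralMomentTerm (n r k : ℕ) (x : ℝ) : ℝ :=
  ((k : ℝ) / n - x) ^ r / r ! * baskakovBasis n k x

/-- The derivative of `centralMomentTerm n (r + 1) k` (note the shift of `r`). -/
noncomputable def centralMomentTermDeriv (n r k : ℕ) (x : ℝ) : ℝ :=
  ((k : ℝ) / n - x) ^ (r + 1) / (r + 1)! * baskakovBasisDeriv n k x - centralMomentTerm n r k x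

lemma hasDerivAt_centralMomentTerm_succ (n r k : ℕ) {x : ℝ} (hx : -1 < x) :
    HasDerivAt (centralMomentTerm n (r + 1) k) (centralMomentTermDeriv n r k x) x := by
  have hpow : HasDerivAt (fun y : ℝ => ((k : ℝ) / n - y) ^ (r + 1) / (r + 1)!)
      (-(((k : ℝ) / n - x) ^ r / r !)) x := by
    refine ((((hasDerivAt_id x).const_sub _).fun_pow (r + 1)).div_const _).congr_deriv ?_
    rw [Nat.factorial_succ]
    push_cast
    field_simp
    simp
  refine (hpow.mul (hasDerivAt_baskakovBasis n k hx)).congr_deriv ?_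
  rw [centralMomentTermDeriv, centralMomentTerm]
  ring

lemma centralMomentTerm_add_two {n : ℕ} (hn : n ≠ 0) (r k : ℕ) {x : ℝ} (hx : -1 < x) :
    n * (r + 2) * centralMomentTerm n (r + 2) k x =
      x * (1 + x) * (centralMomentTermDeriv n r k x + centralMomentTerm n r k x) := by
  have hn' : (n : ℝ) ≠ 0 := Nat.cast_ne_zero.2 hn
  have hX : x * (1 + x) * baskakovBasisDeriv n k x =
      n * ((k : ℝ) / n - x) * baskakovBasis n k x := by
    rw [mul_baskakovBasisDeriv n k hx]; field_simp
  rw [centralMomentTermDeriv, sub_add_cancel, centralMomentTerm, Nat.factorial_succ (r + 1)]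
  generalize (k : ℝ) / n - x = ψ at hX ⊢
  push_cast
  field_simp
  linear_combination (-((r : ℝ) + 2) * ψ ^ (r + 1)) * hX

lemma cast_choose_add_sub_one_le {n : ℕ} (hn : 1 ≤ n) (k : ℕ) :
    ((n + k - 1).choose k : ℝ) ≤ (k + 1) ^ n := by
  rw [Nat.choose_add_sub_one_eq hn k]
  calc ((k + (n - 1)).choose (n - 1) : ℝ) ≤ (k + 1) ^ (n - 1) := by
        exact_mod_cast Nat.choose_add_le_add_one_pow k (n - 1)
    _ ≤ (k + 1) ^ n := pow_le_pow_right₀ (by linarith [k.cast_nonneg (α := ℝ)]) (by omega)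

section Bounds

variable {c y : ℝ}

lemma one_add_pos_of_abs_le (hc : 0 ≤ c) (hy : |y| ≤ c * (1 + y)) : 0 < 1 + y := by
  by_contra! h
  have hy0 : |y| ≤ 0 := hy.trans (mul_nonpos_of_nonneg_of_nonpos hc h)
  linarith [abs_nonpos_iff.1 hy0]

lemma abs_pow_div_one_add_pow_le (hc0 : 0 ≤ c) (hc1 : c ≤ 1) (hy : |y| ≤ c * (1 + y))
    (j m : ℕ) :
    |y| ^ j / (1 + y) ^ (j + m) ≤ 2 ^ m * c ^ j := by
  have hpos := one_add_pos_of_abs_le hc0 hy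
  have htwo : 1 ≤ 2 * (1 + y) := by nlinarith [neg_abs_le y]
  calc |y| ^ j / (1 + y) ^ (j + m) ≤ (c * (1 + y)) ^ j / (1 + y) ^ (j + m) := by gcongr
    _ = c ^ j * 1 / (1 + y) ^ m := by rw [mul_pow, pow_add]; field_simp
    _ ≤ c ^ j * (2 * (1 + y)) ^ m / (1 + y) ^ m := by gcongr; exact one_le_pow₀ htwo
    _ = 2 ^ m * c ^ j := by rw [mul_pow]; field_simp

lemma abs_baskakovBasis_le {n : ℕ} (hn : 1 ≤ n) (hc0 : 0 ≤ c) (hc1 : c ≤ 1)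
    (hy : |y| ≤ c * (1 + y)) (k : ℕ) :
    |baskakovBasis n k y| ≤ 2 ^ n * (k + 1) ^ n * c ^ k := by
  have hpos := one_add_pos_of_abs_le hc0 hy
  calc |baskakovBasis n k y| = (n + k - 1).choose k * (|y| ^ k / (1 + y) ^ (k + n)) := by
        rw [baskakovBasis, abs_div, abs_mul, abs_pow, abs_pow, abs_of_pos hpos, Nat.abs_cast,
          add_comm k n, mul_div_assoc]
    _ ≤ (k + 1) ^ n * (2 ^ n * c ^ k) := by
        gcongr
        exacts [cast_choose_add_sub_one_le hn k, abs_pow_div_one_add_pow_le hc0 hc1 hy k n]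
    _ = 2 ^ n * (k + 1) ^ n * c ^ k := by ring

lemma abs_baskakovBasisDeriv_le {n : ℕ} (hn : 1 ≤ n) (hc0 : 1 / 2 ≤ c) (hc1 : c ≤ 1)
    (hy : |y| ≤ c * (1 + y)) (k : ℕ) :
    |baskakovBasisDeriv n k y| ≤ 2 ^ (n + 3) * (n + 1) * (k + 1) ^ (n + 1) * c ^ k := by
  have hc : 0 ≤ c := by linarith
  have hpos := one_add_pos_of_abs_le hc hy
  have hfirst :
      (k : ℝ) * (|y| ^ (k - 1) / (1 + y) ^ (n + k + 1)) ≤ k * (2 ^ (n + 3) * c ^ k) := by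
    rcases k with _ | j
    · simp
    · gcongr
      calc |y| ^ (j + 1 - 1) / (1 + y) ^ (n + (j + 1) + 1)
          = |y| ^ j / (1 + y) ^ (j + (n + 2)) := by congr 2; omega
        _ ≤ 2 ^ (n + 2) * c ^ j := abs_pow_div_one_add_pow_le hc hc1 hy j (n + 2)
        _ ≤ 2 ^ (n + 2) * c ^ j * (2 * c) := le_mul_of_one_le_right (by positivity) (by linarith)
        _ = 2 ^ (n + 3) * c ^ (j + 1) := by ring
  have hsecond : (n : ℝ) * (|y| ^ k / (1 + y) ^ (n + k + 1)) ≤ n * (2 ^ (n + 3) * c ^ k) := by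
    gcongr
    calc |y| ^ k / (1 + y) ^ (n + k + 1) = |y| ^ k / (1 + y) ^ (k + (n + 1)) := by
          congr 2; omega
      _ ≤ 2 ^ (n + 1) * c ^ k := abs_pow_div_one_add_pow_le hc hc1 hy k (n + 1)
      _ ≤ 2 ^ (n + 3) * c ^ k := by gcongr <;> norm_num
  calc |baskakovBasisDeriv n k y|
      = (n + k - 1).choose k * |k * y ^ (k - 1) - n * y ^ k| / (1 + y) ^ (n + k + 1) := by
        rw [baskakovBasisDeriv, abs_div, abs_mul, abs_of_pos (pow_pos hpos _), Nat.abs_cast]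
    _ ≤ (n + k - 1).choose k * (k * |y| ^ (k - 1) + n * |y| ^ k) / (1 + y) ^ (n + k + 1) := by
        gcongr
        refine (abs_sub _ _).trans_eq ?_
        simp only [abs_mul, abs_pow, Nat.abs_cast]
    _ = (n + k - 1).choose k * (k * (|y| ^ (k - 1) / (1 + y) ^ (n + k + 1)) +
          n * (|y| ^ k / (1 + y) ^ (n + k + 1))) := by ring
    _ ≤ (k + 1) ^ n * (k * (2 ^ (n + 3) * c ^ k) + n * (2 ^ (n + 3) * c ^ k)) := by
        gcongr
        exact cast_choose_add_sub_one_le hn k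
    _ ≤ (k + 1) ^ n * (((n + 1) * (k + 1)) * (2 ^ (n + 3) * c ^ k)) := by
        rw [← add_mul]
        gcongr
        nlinarith [k.cast_nonneg (α := ℝ), n.cast_nonneg (α := ℝ)]
    _ = 2 ^ (n + 3) * (n + 1) * (k + 1) ^ (n + 1) * c ^ k := by ring

end Bounds

lemma summable_add_one_pow_mul_geometric (m : ℕ) {c : ℝ} (hc0 : 0 < c) (hc1 : c < 1) :
    Summable fun k : ℕ => ((k : ℝ) + 1) ^ m * c ^ k := by
  have hc : ‖c‖ < 1 := by rwa [Real.norm_eq_abs, abs_of_pos hc0]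
  have h := summable_pow_mul_geometric_of_norm_lt_one m hc
  have hshift : Summable fun k : ℕ => ((k + 1 : ℕ) : ℝ) ^ m * c ^ (k + 1) :=
    (summable_nat_add_iff 1).2 h
  refine (hshift.mul_left c⁻¹).congr fun k => ?_
  push_cast
  rw [pow_succ]
  field_simp

lemma abs_natCast_div_sub_le {n : ℕ} (hn : 1 ≤ n) (k : ℕ) (y : ℝ) :
    |(k : ℝ) / n - y| ≤ (|y| + 1) * (k + 1) := by
  have hk : (k : ℝ) / n ≤ k := div_le_self k.cast_nonneg (Nat.one_le_cast.2 hn)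
  have := abs_sub ((k : ℝ) / n) y
  rw [abs_of_nonneg (by positivity : (0 : ℝ) ≤ k / n)] at this
  nlinarith [abs_nonneg y, k.cast_nonneg (α := ℝ)]

lemma abs_le_div_mul_one_add_of_mem_Ioo {R y : ℝ} (hR : 1 ≤ R) (hy : y ∈ Set.Ioo (-1 / 3) R) :
    |y| ≤ R / (R + 1) * (1 + y) := by
  obtain ⟨hy1, hy2⟩ := hy
  rw [div_mul_eq_mul_div, le_div_iff₀ (by linarith)]
  rcases abs_cases y with ⟨h, _⟩ | ⟨h, _⟩ <;> rw [h] <;> nlinarith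

lemma exists_summable_bound_centralMomentTermDeriv {n : ℕ} (hn : 1 ≤ n) (r : ℕ) {R : ℝ}
    (hR : 1 ≤ R) :
    ∃ u : ℕ → ℝ, Summable u ∧
      ∀ k : ℕ, ∀ y ∈ Set.Ioo (-1 / 3) R, ‖centralMomentTermDeriv n r k y‖ ≤ u k := by
  set c := R / (R + 1)
  have hc0 : 1 / 2 ≤ c := by rw [le_div_iff₀ (by linarith)]; linarith
  have hc1 : c < 1 := by rw [div_lt_one (by linarith)]; linarith
  set A := 2 * (R + 1) ^ (r + 1) * (2 ^ (n + 3) * (n + 1))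
  refine ⟨fun k => A * (((k : ℝ) + 1) ^ (r + 1 + (n + 1)) * c ^ k),
    (summable_add_one_pow_mul_geometric _ (by linarith) hc1).mul_left A, fun k y hy => ?_⟩
  have hyc := abs_le_div_mul_one_add_of_mem_Ioo hR hy
  set ψ := (k : ℝ) / n - y
  set P := (R + 1) * ((k : ℝ) + 1)
  have hP : 1 ≤ P := one_le_mul_of_one_le_of_one_le (by linarith) (by simp)
  have hyR : |y| < R := abs_lt.2 ⟨by linarith [hy.1], hy.2⟩
  have hψ : |ψ| ≤ P := (abs_natCast_div_sub_le hn k y).trans <|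
    mul_le_mul_of_nonneg_right (by linarith) (by positivity)
  have hfac : ∀ (j : ℕ) (w : ℝ), |ψ ^ j / j ! * w| ≤ |ψ| ^ j * |w| := fun j w => by
    rw [abs_mul, abs_div, abs_pow, Nat.abs_cast]
    gcongr
    exact div_le_self (by positivity) (Nat.one_le_cast.2 j.factorial_pos)
  set B := 2 ^ (n + 3) * (n + 1) * ((k : ℝ) + 1) ^ (n + 1) * c ^ k
  have hv' : |baskakovBasisDeriv n k y| ≤ B := abs_baskakovBasisDeriv_le hn hc0 hc1.le hyc k
  have hv : |baskakovBasis n k y| ≤ B := by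
    refine (abs_baskakovBasis_le hn (by linarith) hc1.le hyc k).trans ?_
    have h2 : (2 : ℝ) ^ n ≤ 2 ^ (n + 3) * (n + 1) :=
      (pow_le_pow_right₀ (by norm_num) (by omega)).trans
        (le_mul_of_one_le_right (by positivity) (by simp))
    have hk : ((k : ℝ) + 1) ^ n ≤ (k + 1) ^ (n + 1) := pow_le_pow_right₀ (by simp) n.le_succ
    exact mul_le_mul_of_nonneg_right (mul_le_mul h2 hk (by positivity) (by positivity))
      (by positivity)
  calc ‖centralMomentTermDeriv n r k y‖
      ≤ |ψ| ^ (r + 1) * |baskakovBasisDeriv n k y| + |ψ| ^ r * |baskakovBasis n k y| :=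
        (norm_sub_le _ _).trans (add_le_add (hfac _ _) (hfac _ _))
    _ ≤ P ^ (r + 1) * B + P ^ (r + 1) * B := by
        gcongr
        exact (pow_le_pow_left₀ (abs_nonneg ψ) hψ r).trans (pow_le_pow_right₀ hP r.le_succ)
    _ = A * (((k : ℝ) + 1) ^ (r + 1 + (n + 1)) * c ^ k) := by
        simp only [A, B, P]
        rw [mul_pow]
        ring

lemma hasSum_centralMomentTermDeriv {n : ℕ} (hn : 1 ≤ n) {r : ℕ} {f : ℝ → ℝ}
    (hf : ∀ z, -1 / 3 < z → HasSum (fun k => centralMomentTerm n (r + 1) k z) (f z))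
    {x : ℝ} (hx : -1 / 3 < x) :
    HasSum (fun k => centralMomentTermDeriv n r k x) (deriv f x) := by
  obtain ⟨u, hu, hbound⟩ :=
    exists_summable_bound_centralMomentTermDeriv hn r (R := |x| + 1) (by linarith [abs_nonneg x])
  have hxU : x ∈ Set.Ioo (-1 / 3) (|x| + 1) := ⟨hx, by linarith [le_abs_self x]⟩
  have hsum := hasDerivAt_tsum_of_isPreconnected hu isOpen_Ioo isPreconnected_Ioo
    (fun k y hy => hasDerivAt_centralMomentTerm_succ n r k (by linarith [hy.1])) hbound hxU
    (hf x hx).summable hxU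
  have htsum : (fun z => ∑' k, centralMomentTerm n (r + 1) k z) =ᶠ[𝓝 x] f := by
    filter_upwards [Ioi_mem_nhds hx] with z hz using (hf z hz).tsum_eq
  rw [(hsum.congr_of_eventuallyEq htsum.symm).deriv]
  exact (Summable.of_norm_bounded hu fun k => hbound k x hxU).hasSum

theorem hasSum_centralMomentTerm {n : ℕ} (hn : 1 ≤ n) :
    ∀ (r : ℕ) {x : ℝ}, -1 / 3 < x →
      HasSum (fun k => centralMomentTerm n r k x) (theta n r x)
  | 0, x, hx => by
    simpa [centralMomentTerm, theta] using hasSum_baskakovBasis hn (by linarith)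
  | 1, x, hx => by
    have hn' : (n : ℝ) ≠ 0 := by positivity
    have hsum := ((hasSum_natCast_mul_baskakovBasis hn (x := x) (by linarith)).div_const n).sub
      ((hasSum_baskakovBasis hn (x := x) (by linarith)).mul_left x)
    rw [mul_div_cancel_left₀ x hn', mul_one, sub_self] at hsum
    refine hsum.congr_fun fun k => ?_
    simp only [centralMomentTerm]
    ring
  | r + 2, x, hx => by
    have hderiv := hasSum_centralMomentTermDeriv hn
      (fun z hz => hasSum_centralMomentTerm hn (r + 1) hz) hx
    have hsum := ((hderiv.add (hasSum_centralMomentTerm hn r hx)).mul_left (x * (1 + x))).div_const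
      ((n : ℝ) * (r + 2))
    have hn' : (n : ℝ) ≠ 0 := by positivity
    show HasSum _ (x * (1 + x) * (deriv (theta n (r + 1)) x + theta n r x) / (n * (r + 2)))
    refine hsum.congr_fun fun k => ?_
    rw [← centralMomentTerm_add_two (by omega) r k (by linarith)]
    field_simp

/-- On polynomials, the Baskakov operator admits the differential
representation `V_n = Σ_r θ_r^{(n)} D^r`, the defining series being absolutely
convergent for every x ≥ 0. -/
theorem baskakov_as_differential_operator (n : ℕ) (hn : 1 ≤ n) (p : Polynomial ℝ)
    (x : ℝ) (hx : 0 ≤ x) :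
    Summable (fun k : ℕ => |p.eval ((k : ℝ) / n) * baskakovBasis n k x|) ∧
    baskakov n (fun t => p.eval t) x =
      ∑ r ∈ Finset.range (p.natDegree + 1),
        theta n r x * (Polynomial.derivative^[r] p).eval x := by
  have hterm : ∀ k : ℕ, p.eval ((k : ℝ) / n) * baskakovBasis n k x =
      ∑ r ∈ range (p.natDegree + 1),
        centralMomentTerm n r k x * (Polynomial.derivative^[r] p).eval x := fun k => by
    rw [p.eval_eq_sum_range_iterate_derivative x, sum_mul]
    refine sum_congr rfl fun r _ => ?_
    rw [centralMomentTerm]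
    ring
  have hsum : HasSum (fun k : ℕ => p.eval ((k : ℝ) / n) * baskakovBasis n k x)
      (∑ r ∈ range (p.natDegree + 1), theta n r x * (Polynomial.derivative^[r] p).eval x) :=
    (hasSum_sum fun r _ => (hasSum_centralMomentTerm hn r (by linarith)).mul_right _).congr_fun
      hterm
  exact ⟨hsum.summable.abs, hsum.tsum_eq⟩
end

section
/- For every integer r ≥ 2 and every real x ≥ 0, lim_{n→∞} n^r·θ_{2r-1}^{(n)}(x) = (1+2x)·X^{r-1} / (3·2^{r-1}·(r-2)!), where X = x(1+x). -/
open Filter Topology Finset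

/-!
Expanding in powers of `1/n`, `θ_m^{(n)} = Σ_j a_{m,j} n^{-j}` where the polynomials
`a_{m,j} = thetaCoeff m j` do not depend on `n` and obey
`(m+2) a_{m+2,j+1} = X (a_{m+1,j}' + a_{m,j})`. By induction `a_{m,j} = 0` unless
`m/2 ≤ j ≤ m`, so `n^r θ_{2r-1}^{(n)} → a_{2r-1,r}`. The diagonal `a_{2s,s} = X^s / (2^s s!)`
is explicit, and feeding it into the recursion gives
`a_{2s+3,s+2} = (1+2x) X^{s+1} / (3·2^{s+1} s!)`.
-/

open Polynomial

noncomputable def thetaCoeff : ℕ → ℕ → ℝ[X]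
  | 0, 0 => 1
  | 0, _ + 1 => 0
  | 1, _ => 0
  | _ + 2, 0 => 0
  | m + 2, j + 1 =>
    C ((m + 2 : ℝ))⁻¹ * (X * (1 + X) * (derivative (thetaCoeff (m + 1) j) + thetaCoeff m j))

lemma thetaCoeff_succ_succ (m j : ℕ) :
    thetaCoeff (m + 2) (j + 1) =
      C ((m + 2 : ℝ))⁻¹ * (X * (1 + X) * (derivative (thetaCoeff (m + 1) j) + thetaCoeff m j)) :=
  rfl

lemma thetaCoeff_eq_zero_of_two_mul_lt {m j : ℕ} (h : 2 * j < m) : thetaCoeff m j = 0 := by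
  induction m, j using thetaCoeff.induct with
  | case5 m j ih₁ ih₂ => rw [thetaCoeff_succ_succ, ih₁ (by omega), ih₂ (by omega)]; simp
  | _ => first | omega | rfl

lemma thetaCoeff_eq_zero_of_lt {m j : ℕ} (h : m < j) : thetaCoeff m j = 0 := by
  induction m, j using thetaCoeff.induct with
  | case5 m j ih₁ ih₂ => rw [thetaCoeff_succ_succ, ih₁ (by omega), ih₂ (by omega)]; simp
  | _ => first | omega | rfl

lemma derivative_X_mul_one_add_X : derivative (X * (1 + X) : ℝ[X]) = 1 + 2 * X := by
  simp only [derivative_mul, derivative_X, derivative_add, derivative_one]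
  ring

lemma thetaCoeff_two_mul (s : ℕ) :
    thetaCoeff (2 * s) s = C ((2 ^ s * s.factorial : ℝ))⁻¹ * (X * (1 + X)) ^ s := by
  induction s with
  | zero => simp [thetaCoeff]
  | succ s ih =>
    rw [show 2 * (s + 1) = 2 * s + 2 by ring, thetaCoeff_succ_succ,
      thetaCoeff_eq_zero_of_two_mul_lt (by omega), ih]
    apply Polynomial.funext
    intro y
    simp only [Nat.cast_mul, Nat.cast_ofNat, derivative_zero, mul_inv_rev, map_mul, zero_add,
      eval_mul, eval_C, eval_X, eval_add, eval_one, eval_pow, Nat.factorial_succ, Nat.cast_add,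
      Nat.cast_one]
    field_simp
    ring

lemma thetaCoeff_two_mul_add_three (s : ℕ) :
    thetaCoeff (2 * s + 3) (s + 2) =
      C ((3 * 2 ^ (s + 1) * s.factorial : ℝ))⁻¹ * ((1 + 2 * X) * (X * (1 + X)) ^ (s + 1)) := by
  induction s with
  | zero =>
    have h21 : thetaCoeff 2 1 = C (2 : ℝ)⁻¹ * (X * (1 + X)) := by
      simpa using thetaCoeff_two_mul 1
    rw [thetaCoeff_succ_succ, h21, derivative_C_mul, derivative_X_mul_one_add_X]
    apply Polynomial.funext
    intro y
    simp only [Nat.cast_one, thetaCoeff, add_zero, eval_mul, eval_C, eval_X, eval_add, eval_one,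
      eval_ofNat, zero_add, pow_one, Nat.factorial_zero, mul_one, mul_inv_rev, map_mul]
    ring
  | succ s ih =>
    rw [show 2 * (s + 1) + 3 = 2 * s + 3 + 2 by ring, thetaCoeff_succ_succ,
      show 2 * s + 3 + 1 = 2 * (s + 2) by ring, thetaCoeff_two_mul, ih,
      derivative_C_mul, derivative_pow, derivative_X_mul_one_add_X]
    apply Polynomial.funext
    intro y
    simp only [Nat.cast_add, Nat.cast_mul, Nat.cast_ofNat, Nat.factorial_succ, Nat.cast_one,
      mul_inv_rev, map_mul, map_add, map_natCast, Nat.add_one_sub_one, eval_mul, eval_C, eval_X,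
      eval_add, eval_one, eval_natCast, eval_pow, eval_ofNat]
    field_simp
    ring

noncomputable def thetaPoly (n m : ℕ) : ℝ[X] :=
  ∑ j ∈ range (m + 1), C ((n : ℝ)⁻¹ ^ j) * thetaCoeff m j

lemma thetaPoly_succ_succ (n m : ℕ) :
    thetaPoly n (m + 2) = C ((n * (m + 2) : ℝ))⁻¹ *
      (X * (1 + X) * (derivative (thetaPoly n (m + 1)) + thetaPoly n m)) := by
  have hprev : thetaPoly n m = ∑ j ∈ range (m + 2), C ((n : ℝ)⁻¹ ^ j) * thetaCoeff m j := by
    rw [sum_range_succ, thetaCoeff_eq_zero_of_lt (by omega), mul_zero, add_zero, thetaPoly]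
  rw [thetaPoly, sum_range_succ', hprev, thetaPoly, derivative_sum]
  simp only [derivative_C_mul, thetaCoeff, mul_zero, add_zero]
  rw [← sum_add_distrib, mul_sum, mul_sum]
  refine sum_congr rfl fun j _ => ?_
  have hC : C ((n : ℝ)⁻¹ ^ (j + 1)) * C ((m + 2 : ℝ))⁻¹ =
      C ((n * (m + 2) : ℝ))⁻¹ * C ((n : ℝ)⁻¹ ^ j) := by
    rw [← map_mul, ← map_mul, pow_succ, mul_inv]
    ring_nf
  linear_combination (X * (1 + X) * (derivative (thetaCoeff (m + 1) j) + thetaCoeff m j)) * hC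

lemma theta_eq_eval_thetaPoly (n m : ℕ) : theta n m = fun x => (thetaPoly n m).eval x := by
  induction m using theta.induct with
  | case3 m ih₁ ih₂ =>
    funext x
    rw [theta, ih₁, ih₂, thetaPoly_succ_succ]
    simp only [Polynomial.deriv, eval_mul, eval_C, eval_add, eval_one, eval_X]
    field_simp
  | _ => funext x; simp [theta, thetaPoly, thetaCoeff]

lemma tendsto_pow_mul_sum_mul_inv_pow (c : ℕ → ℝ) {k N : ℕ} (hkN : k < N)
    (hc : ∀ j < k, c j = 0) :
    Tendsto (fun n : ℕ => (n : ℝ) ^ k * ∑ j ∈ range N, c j * (n : ℝ)⁻¹ ^ j) atTop (𝓝 (c k)) := by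
  have hlim : Tendsto (fun n : ℕ => ∑ j ∈ range N, c j * (n : ℝ)⁻¹ ^ (j - k)) atTop
      (𝓝 (∑ j ∈ range N, c j * 0 ^ (j - k))) :=
    tendsto_finsetSum _ fun j _ => (tendsto_inv_atTop_nhds_zero_nat.pow _).const_mul _
  have hval : ∑ j ∈ range N, c j * (0 : ℝ) ^ (j - k) = c k := by
    rw [sum_eq_single_of_mem k (mem_range.2 hkN) fun j _ hj => ?_, Nat.sub_self, pow_zero, mul_one]
    rcases lt_or_gt_of_ne hj with hlt | hgt
    · rw [hc j hlt, zero_mul]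
    · rw [zero_pow (by omega), mul_zero]
  rw [← hval]
  refine hlim.congr' ?_
  filter_upwards [eventually_ne_atTop 0] with n hn
  rw [mul_sum]
  refine sum_congr rfl fun j _ => ?_
  rcases lt_or_ge j k with hlt | hge
  · simp [hc j hlt]
  · obtain ⟨i, rfl⟩ := Nat.exists_eq_add_of_le hge
    have hcancel : (n : ℝ) ^ k * (n : ℝ)⁻¹ ^ k = 1 := by
      rw [← mul_pow, mul_inv_cancel₀ (Nat.cast_ne_zero.2 hn), one_pow]
    rw [Nat.add_sub_cancel_left, pow_add]
    linear_combination (-(c (k + i) * (n : ℝ)⁻¹ ^ i)) * hcancel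

lemma theta_eq_sum (n m : ℕ) (x : ℝ) :
    theta n m x = ∑ j ∈ range (m + 1), (thetaCoeff m j).eval x * (n : ℝ)⁻¹ ^ j := by
  simp only [theta_eq_eval_thetaPoly, thetaPoly, eval_finsetSum, eval_mul, eval_C, mul_comm]

theorem theta_odd_asymptotics_general (r : ℕ) (hr : 2 ≤ r) (x : ℝ) :
    Filter.Tendsto (fun n : ℕ => (n : ℝ) ^ r * theta n (2 * r - 1) x) Filter.atTop
      (nhds ((1 + 2 * x) * (x * (1 + x)) ^ (r - 1) /
        (3 * 2 ^ (r - 1) * (Nat.factorial (r - 2) : ℝ)))) := by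
  obtain ⟨s, rfl⟩ : ∃ s, r = s + 2 := ⟨r - 2, by omega⟩
  have hlim := tendsto_pow_mul_sum_mul_inv_pow (fun j => (thetaCoeff (2 * s + 3) j).eval x)
    (k := s + 2) (N := 2 * s + 3 + 1) (by omega)
    fun j hj => by rw [thetaCoeff_eq_zero_of_two_mul_lt (by omega), eval_zero]
  simp only [thetaCoeff_two_mul_add_three, eval_mul, eval_C, eval_add, eval_one, eval_X,
    eval_pow, eval_ofNat, ← theta_eq_sum] at hlim
  rw [show 2 * (s + 2) - 1 = 2 * s + 3 by omega, Nat.add_sub_cancel, show s + 2 - 1 = s + 1 by omega]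
  convert hlim using 2
  ring

/-- `lim_{n→∞} n^r θ_{2r-1}^{(n)}(x) = (1+2x) X^{r-1} / (3·2^{r-1}(r-2)!)`. -/
theorem theta_odd_asymptotics (r : ℕ) (hr : 2 ≤ r) (x : ℝ) (hx : 0 ≤ x) :
    Filter.Tendsto (fun n : ℕ => (n : ℝ) ^ r * theta n (2 * r - 1) x) Filter.atTop
      (nhds ((1 + 2 * x) * (x * (1 + x)) ^ (r - 1) /
        (3 * 2 ^ (r - 1) * (Nat.factorial (r - 2) : ℝ)))) :=
  theta_odd_asymptotics_general r hr x
end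

section
/- For every integer r ≥ 2 and every real x ≥ 0, lim_{n→∞} n^r·η_{2r-1}^{(n)}(x) = (−1)^r·(1+2x)·X^{r-1} / (3·2^{r-2}·(r-2)!), where X = x(1+x). -/
open Filter Topology Finset

/-! Multiplying the recurrence by `n^(m+2)` expresses `n^(m+2) η_{2m+3}` and `n^(m+2) η_{2m+4}`
through `n^(m+1) η_{2m+1}`, `n^(m+1) η_{2m+2}` and `n^(m+2) η_{2m+3}`, with coefficients
`n / (n + c)` or `1 / (n + c)`. So a simultaneous induction on `m` shows that these scaled
polynomials converge, the limits obeying a recurrence with no `n` in it; in the even step the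
`η_{2m+3}` term is one power of `n` short and drops out, which makes the even limits a pure
power of `-X / 2` and lets the odd recurrence be solved in closed form. -/

/-- `etaEvenLimit x m` and `etaOddLimit x m` are the limits of `n^(m+1) η_{2m+2}^{(n)}(x)` and
`n^(m+1) η_{2m+1}^{(n)}(x)`. -/
noncomputable def etaEvenLimit (x : ℝ) (m : ℕ) : ℝ :=
  (-1) ^ (m + 1) * (x * (1 + x)) ^ (m + 1) / (2 ^ (m + 1) * (m + 1).factorial)

noncomputable def etaOddLimit (x : ℝ) : ℕ → ℝ
  | 0 => 0
  | j + 1 => (-1) ^ j * (1 + 2 * x) * (x * (1 + x)) ^ (j + 1) / (3 * 2 ^ j * j.factorial)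

lemma natCast_mul_eta_two (n : ℕ) (x : ℝ) :
    (n : ℝ) * eta n 2 x = -(x * (1 + x)) / 2 * ((n : ℝ) / (n + 1)) := by
  simp only [eta]
  push_cast
  field_simp
  ring

lemma natCast_pow_mul_eta_odd_succ (n m : ℕ) (x : ℝ) :
    (n : ℝ) ^ (m + 2) * eta n (2 * m + 3) x =
      (-((2 * m + 2) * (1 + 2 * x) * ((n : ℝ) ^ (m + 1) * eta n (2 * m + 2) x))
          - x * (1 + x) * ((n : ℝ) ^ (m + 1) * eta n (2 * m + 1) x)) / (2 * m + 3)
        * ((n : ℝ) / (n + (2 * m + 2))) := by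
  change _ * eta n (2 * m + 1 + 2) x = _
  rw [eta]
  push_cast
  field_simp
  ring

lemma natCast_pow_mul_eta_even_succ (n m : ℕ) (x : ℝ) :
    (n : ℝ) ^ (m + 2) * eta n (2 * m + 4) x =
      (-((2 * m + 3) * (1 + 2 * x) * ((n : ℝ) ^ (m + 2) * eta n (2 * m + 3) x)
            * ((n : ℝ) + (2 * m + 3))⁻¹)
        - x * (1 + x) * ((n : ℝ) ^ (m + 1) * eta n (2 * m + 2) x)
            * ((n : ℝ) / (n + (2 * m + 3)))) / (2 * m + 4) := by
  change _ * eta n (2 * m + 2 + 2) x = _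
  rw [eta]
  push_cast
  field_simp
  ring

lemma etaOddLimit_succ (x : ℝ) (m : ℕ) :
    (-((2 * m + 2) * (1 + 2 * x) * etaEvenLimit x m) - x * (1 + x) * etaOddLimit x m)
        / (2 * m + 3) = etaOddLimit x (m + 1) := by
  rcases m with _ | j
  · simp [etaOddLimit, etaEvenLimit]
    ring
  · simp only [etaOddLimit, etaEvenLimit, Nat.factorial_succ]
    push_cast
    field_simp
    ring

lemma etaEvenLimit_succ (x : ℝ) (m : ℕ) :
    -(x * (1 + x) * etaEvenLimit x m) / (2 * m + 4) = etaEvenLimit x (m + 1) := by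
  simp only [etaEvenLimit, Nat.factorial_succ (m + 1)]
  push_cast
  field_simp
  ring

lemma tendsto_natCast_add_inv (c : ℝ) :
    Tendsto (fun n : ℕ => ((n : ℝ) + c)⁻¹) atTop (𝓝 0) :=
  (tendsto_atTop_add_const_right _ c tendsto_natCast_atTop_atTop).inv_tendsto_atTop

lemma tendsto_eta_even_odd (x : ℝ) (m : ℕ) :
    Tendsto (fun n : ℕ => (n : ℝ) ^ (m + 1) * eta n (2 * m + 2) x) atTop
        (𝓝 (etaEvenLimit x m)) ∧
      Tendsto (fun n : ℕ => (n : ℝ) ^ (m + 1) * eta n (2 * m + 1) x) atTop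
        (𝓝 (etaOddLimit x m)) := by
  induction m with
  | zero =>
    constructor
    · simp only [zero_add, pow_one, mul_zero]
      refine .congr (fun n => (natCast_mul_eta_two n x).symm) ?_
      convert (tendsto_natCast_div_add_atTop (1 : ℝ)).const_mul (-(x * (1 + x)) / 2) using 2
      simp [etaEvenLimit]
    · simp [eta, etaOddLimit]
  | succ m ih =>
    obtain ⟨hEven, hOdd⟩ := ih
    have hOdd' : Tendsto (fun n : ℕ => (n : ℝ) ^ (m + 2) * eta n (2 * m + 3) x) atTop
        (𝓝 (etaOddLimit x (m + 1))) := by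
      refine .congr (fun n => (natCast_pow_mul_eta_odd_succ n m x).symm) ?_
      rw [← etaOddLimit_succ, ← mul_one (_ / (2 * (m : ℝ) + 3))]
      exact (((hEven.const_mul _).neg.sub (hOdd.const_mul _)).div_const _).mul
        (tendsto_natCast_div_add_atTop _)
    have hEven' : Tendsto (fun n : ℕ => (n : ℝ) ^ (m + 2) * eta n (2 * m + 4) x) atTop
        (𝓝 (etaEvenLimit x (m + 1))) := by
      refine .congr (fun n => (natCast_pow_mul_eta_even_succ n m x).symm) ?_
      rw [← etaEvenLimit_succ]
      convert (((hOdd'.const_mul _).mul (tendsto_natCast_add_inv _)).neg.sub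
        ((hEven.const_mul _).mul (tendsto_natCast_div_add_atTop _))).div_const _ using 2
      ring
    exact ⟨hEven', hOdd'⟩

theorem eta_odd_asymptotics_general (r : ℕ) (hr : 2 ≤ r) (x : ℝ) :
    Filter.Tendsto (fun n : ℕ => (n : ℝ) ^ r * eta n (2 * r - 1) x) Filter.atTop
      (nhds ((-1 : ℝ) ^ r * (1 + 2 * x) * (x * (1 + x)) ^ (r - 1) /
        (3 * 2 ^ (r - 2) * (Nat.factorial (r - 2) : ℝ)))) := by
  obtain ⟨j, rfl⟩ : ∃ j, r = j + 2 := ⟨r - 2, by omega⟩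
  have h := (tendsto_eta_even_odd x (j + 1)).2
  rw [show 2 * (j + 1) + 1 = 2 * (j + 2) - 1 by omega] at h
  convert h using 2
  simp [etaOddLimit, pow_succ]

/-- `lim_{n→∞} n^r η_{2r-1}^{(n)}(x) = (-1)^r (1+2x) X^{r-1} / (3·2^{r-2}(r-2)!)`. -/
theorem eta_odd_asymptotics (r : ℕ) (hr : 2 ≤ r) (x : ℝ) (hx : 0 ≤ x) :
    Filter.Tendsto (fun n : ℕ => (n : ℝ) ^ r * eta n (2 * r - 1) x) Filter.atTop
      (nhds ((-1 : ℝ) ^ r * (1 + 2 * x) * (x * (1 + x)) ^ (r - 1) /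
        (3 * 2 ^ (r - 2) * (Nat.factorial (r - 2) : ℝ)))) :=
  eta_odd_asymptotics_general r hr x
end

section
/- Let n ≥ 1 and m ≥ 0 be integers. Then for every real x ≥ 0, the m-th central moment of the Baskakov operator satisfies Σ_{k=0}^∞ (k/n − x)^m·v_{k,n}(x) = m!·θ_m^{(n)}(x). -/
open Filter Topology Finset

/-!
Expanding `(k / n - x) ^ m` in the binomial basis `k.choose i` reduces the central moment to a
finite combination of the factorial moments `∑ₖ C(k, i) v_{k,n}(x) = C(n+i-1, i) xⁱ`, so it is
a polynomial `F_m` in `x`. The factorial moments `bᵢ` inherit from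
`X v_{k,n}' = (k - n x) v_{k,n}` the identity `X bᵢ' = (i - n x) bᵢ + (i + 1) b_{i+1}`, and with
it `F_m` satisfies `n F_{m+1} = X (F_m' + m F_{m-1})`, which is the recurrence of `m! θ_m`.
-/

namespace Baskakov

theorem choose_mul_choose_add (N l i : ℕ) :
    (l + i).choose i * (N + (l + i)).choose (l + i) = (N + i).choose i * (N + i + l).choose l := by
  have hL := Nat.choose_mul (n := N + (l + i)) (Nat.le_add_left i l)
  have hR := Nat.choose_mul (n := N + (l + i)) (Nat.le_add_left i N)
  rw [show N + (l + i) - i = N + l by omega, Nat.add_sub_cancel] at hL hR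
  rw [Nat.choose_symm_add] at hR
  rw [mul_comm, hL, ← hR, show N + i + l = N + (l + i) by ring,
    Nat.choose_symm_of_eq_add (show N + (l + i) = l + (N + i) by ring), mul_comm]

theorem add_one_mul_choose_add_one (n i : ℕ) :
    (i + 1) * (n + i).choose (i + 1) = (n + i) * (n + i - 1).choose i := by
  cases h : n + i with
  | zero => simp
  | succ M => rw [Nat.add_sub_cancel, Nat.add_one_mul_choose_eq, mul_comm]

theorem cast_mul_choose (k i : ℕ) :
    (k : ℝ) * k.choose i = i * k.choose i + (i + 1) * k.choose (i + 1) := by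
  have h := Nat.choose_succ_right_eq k i
  rcases le_or_gt i k with hik | hik
  · have h' : ((k.choose (i + 1) * (i + 1) : ℕ) : ℝ) = ((k.choose i * (k - i) : ℕ) : ℝ) :=
      congrArg _ h
    push_cast [Nat.cast_sub hik] at h'
    linear_combination -h'
  · simp [Nat.choose_eq_zero_of_lt hik, Nat.choose_eq_zero_of_lt (Nat.lt_succ_of_lt hik)]

theorem hasSum_baskakovBasis {n : ℕ} (hn : 0 < n) {x : ℝ} (hx : 0 ≤ x) :
    HasSum (fun k => baskakovBasis n k x) 1 := by
  obtain ⟨N, rfl⟩ : ∃ N, n = N + 1 := ⟨n - 1, by omega⟩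
  have hr : ‖x / (1 + x)‖ < 1 := by
    rw [Real.norm_eq_abs, abs_of_nonneg (by positivity), div_lt_one (by positivity)]
    linarith
  have h := (hasSum_choose_mul_geometric_of_norm_lt_one N hr).mul_left ((1 + x) ^ (N + 1))⁻¹
  rw [show 1 - x / (1 + x) = (1 + x)⁻¹ by field_simp; ring, one_div, inv_pow, inv_inv,
    inv_mul_cancel₀ (by positivity)] at h
  refine h.congr_fun fun k => ?_
  rw [baskakovBasis, show N + 1 + k - 1 = k + N by omega, Nat.choose_symm_add, div_pow]
  field_simp
  ring

noncomputable def factorialMoment (n i : ℕ) (x : ℝ) : ℝ :=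
  ((n + i - 1).choose i : ℝ) * x ^ i

theorem choose_mul_baskakovBasis {n : ℕ} (hn : 0 < n) (l i : ℕ) (x : ℝ) :
    ((l + i).choose i : ℝ) * baskakovBasis n (l + i) x
      = factorialMoment n i x * baskakovBasis (n + i) l x := by
  obtain ⟨N, rfl⟩ : ∃ N, n = N + 1 := ⟨n - 1, by omega⟩
  have key : ((l + i).choose i * (N + 1 + (l + i) - 1).choose (l + i) : ℝ)
      = (N + 1 + i - 1).choose i * (N + 1 + i + l - 1).choose l := by
    rw [show N + 1 + (l + i) - 1 = N + (l + i) by omega, show N + 1 + i - 1 = N + i by omega,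
      show N + 1 + i + l - 1 = N + i + l by omega]
    exact_mod_cast choose_mul_choose_add N l i
  rw [baskakovBasis, baskakovBasis, factorialMoment, mul_div_assoc', ← mul_assoc, key,
    show N + 1 + (l + i) = N + 1 + i + l by ring, pow_add]
  ring

theorem hasSum_choose_mul_baskakovBasis {n : ℕ} (hn : 0 < n) (i : ℕ) {x : ℝ} (hx : 0 ≤ x) :
    HasSum (fun k => (k.choose i : ℝ) * baskakovBasis n k x) (factorialMoment n i x) := by
  rw [← hasSum_nat_add_iff' i, Finset.sum_eq_zero fun k hk => by
    rw [Nat.choose_eq_zero_of_lt (Finset.mem_range.mp hk), Nat.cast_zero, zero_mul], sub_zero,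
    ← mul_one (factorialMoment n i x)]
  exact ((hasSum_baskakovBasis (by omega) hx).mul_left _).congr_fun
    fun l => choose_mul_baskakovBasis hn l i x

theorem differentiable_factorialMoment (n i : ℕ) : Differentiable ℝ (factorialMoment n i) := by
  unfold factorialMoment
  fun_prop

/-- Finite form of `x (1 + x) v_{k,n}'(x) = (k - n x) v_{k,n}(x)`, read through
`k C(k, i) = i C(k, i) + (i + 1) C(k, i + 1)`. -/
theorem mul_deriv_factorialMoment (n i : ℕ) (x : ℝ) :
    x * (1 + x) * deriv (factorialMoment n i) x
      = (i - n * x) * factorialMoment n i x + (i + 1) * factorialMoment n (i + 1) x := by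
  have hc : ((i + 1) * (n + i).choose (i + 1) : ℝ) = (n + i) * (n + i - 1).choose i := by
    exact_mod_cast add_one_mul_choose_add_one n i
  have hderiv : deriv (factorialMoment n i) x = (n + i - 1).choose i * (i * x ^ (i - 1)) := by
    unfold factorialMoment
    simp
  rw [hderiv, factorialMoment, factorialMoment, show n + (i + 1) - 1 = n + i by omega]
  rcases i with _ | i
  · simp
  · push_cast at hc ⊢
    linear_combination (-x ^ (i + 2)) * hc

/-- `newtonCoeff n m i x` is the coefficient of `k.choose i` in `(k / n - x) ^ m`; the recursion
comes from `(k / n - x) C(k, i) = (i / n - x) C(k, i) + (i + 1) / n C(k, i + 1)`. At `i = 0` the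
truncated `i - 1` is harmless, its factor `i / n` being `0`. -/
noncomputable def newtonCoeff (n : ℕ) : ℕ → ℕ → ℝ → ℝ
  | 0, i, _ => if i = 0 then 1 else 0
  | m + 1, i, x => (i / n - x) * newtonCoeff n m i x + i / n * newtonCoeff n m (i - 1) x

theorem newtonCoeff_of_lt {n m i : ℕ} (h : m < i) (x : ℝ) : newtonCoeff n m i x = 0 := by
  induction m generalizing i with
  | zero => simp [newtonCoeff, h.ne']
  | succ m ih => simp [newtonCoeff, ih (by omega : m < i), ih (by omega : m < i - 1)]

theorem hasDerivAt_newtonCoeff_succ (n m i : ℕ) (x : ℝ) :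
    HasDerivAt (newtonCoeff n (m + 1) i) (-(m + 1) * newtonCoeff n m i x) x := by
  induction m generalizing i with
  | zero =>
    simpa [newtonCoeff] using ((hasDerivAt_id x).const_sub _).mul_const (newtonCoeff n 0 i x)
  | succ m ih =>
    have h := (((hasDerivAt_id' x).const_sub ((i : ℝ) / n)).fun_mul (ih i)).fun_add
      ((ih (i - 1)).const_mul ((i : ℝ) / n))
    refine h.congr_deriv ?_
    simp only [newtonCoeff]
    push_cast
    ring

theorem sum_newtonCoeff_succ (n m : ℕ) (x : ℝ) (e : ℕ → ℝ) :
    ∑ i ∈ range (m + 2), newtonCoeff n (m + 1) i x * e i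
      = ∑ i ∈ range (m + 1),
          newtonCoeff n m i x * ((i / n - x) * e i + (i + 1) / n * e (i + 1)) := by
  simp only [newtonCoeff, add_mul, mul_add, sum_add_distrib]
  congr 1
  · rw [sum_range_succ, newtonCoeff_of_lt (Nat.lt_succ_self m)]
    simp only [zero_mul, mul_zero, add_zero]
    exact sum_congr rfl fun i _ => by ring
  · rw [sum_range_succ']
    simp only [CharP.cast_eq_zero, zero_div, zero_mul, add_zero, Nat.add_sub_cancel]
    exact sum_congr rfl fun i _ => by push_cast; ring

theorem div_sub_pow_eq_sum_newtonCoeff (n m k : ℕ) (x : ℝ) :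
    ((k : ℝ) / n - x) ^ m = ∑ i ∈ range (m + 1), newtonCoeff n m i x * k.choose i := by
  induction m with
  | zero => simp [newtonCoeff]
  | succ m ih =>
    rw [sum_newtonCoeff_succ, pow_succ, ih, sum_mul]
    refine sum_congr rfl fun i _ => ?_
    linear_combination newtonCoeff n m i x / n * cast_mul_choose k i

noncomputable def centralMomentPoly (n m : ℕ) (x : ℝ) : ℝ :=
  ∑ i ∈ range (m + 1), newtonCoeff n m i x * factorialMoment n i x

theorem hasSum_centralMomentPoly {n : ℕ} (hn : 0 < n) (m : ℕ) {x : ℝ} (hx : 0 ≤ x) :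
    HasSum (fun k : ℕ => ((k : ℝ) / n - x) ^ m * baskakovBasis n k x)
      (centralMomentPoly n m x) := by
  have h := hasSum_sum fun i (_ : i ∈ range (m + 1)) =>
    (hasSum_choose_mul_baskakovBasis hn i hx).mul_left (newtonCoeff n m i x)
  refine h.congr_fun fun k => ?_
  rw [div_sub_pow_eq_sum_newtonCoeff, sum_mul]
  exact sum_congr rfl fun i _ => by ring

theorem centralMomentPoly_zero (n : ℕ) (x : ℝ) : centralMomentPoly n 0 x = 1 := by
  simp [centralMomentPoly, newtonCoeff, factorialMoment]

theorem centralMomentPoly_one {n : ℕ} (hn : n ≠ 0) (x : ℝ) : centralMomentPoly n 1 x = 0 := by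
  simp [centralMomentPoly, sum_range_succ, newtonCoeff, factorialMoment, hn]

theorem hasDerivAt_centralMomentPoly_succ (n m : ℕ) (x : ℝ) :
    HasDerivAt (centralMomentPoly n (m + 1))
      (∑ i ∈ range (m + 2), newtonCoeff n (m + 1) i x * deriv (factorialMoment n i) x
        - (m + 1) * centralMomentPoly n m x) x := by
  have h := HasDerivAt.fun_sum fun i (_ : i ∈ range (m + 2)) =>
    (hasDerivAt_newtonCoeff_succ n m i x).fun_mul
      (differentiable_factorialMoment n i x).hasDerivAt
  have hm : centralMomentPoly n m x
      = ∑ i ∈ range (m + 2), newtonCoeff n m i x * factorialMoment n i x := by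
    rw [sum_range_succ, newtonCoeff_of_lt (Nat.lt_succ_self m), zero_mul, add_zero]
    rfl
  refine h.congr_deriv ?_
  rw [hm, mul_sum, ← sum_sub_distrib]
  exact sum_congr rfl fun i _ => by ring

theorem centralMomentPoly_add_two {n : ℕ} (hn : n ≠ 0) (m : ℕ) (x : ℝ) :
    n * centralMomentPoly n (m + 2) x
      = x * (1 + x) *
          (deriv (centralMomentPoly n (m + 1)) x + (m + 1) * centralMomentPoly n m x) := by
  rw [(hasDerivAt_centralMomentPoly_succ n m x).deriv, sub_add_cancel, mul_sum, centralMomentPoly,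
    sum_newtonCoeff_succ, mul_sum]
  refine sum_congr rfl fun i _ => ?_
  have hmul : (n : ℝ) *
        ((i / n - x) * factorialMoment n i x + (i + 1) / n * factorialMoment n (i + 1) x)
      = (i - n * x) * factorialMoment n i x + (i + 1) * factorialMoment n (i + 1) x := by
    field_simp
  linear_combination newtonCoeff n (m + 1) i x * (hmul - mul_deriv_factorialMoment n i x)

theorem factorial_mul_theta {n : ℕ} (hn : n ≠ 0) (m : ℕ) (x : ℝ) :
    m.factorial * theta n m x = centralMomentPoly n m x := by
  induction m using Nat.twoStepInduction generalizing x with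
  | zero => simp [theta, centralMomentPoly_zero]
  | one => simp [theta, centralMomentPoly_one hn]
  | more m ihm ihm1 =>
    have hfun : theta n (m + 1) = fun y => centralMomentPoly n (m + 1) y / (m + 1).factorial := by
      funext y
      rw [← ihm1, mul_div_cancel_left₀ _ (by positivity)]
    have hderiv : deriv (theta n (m + 1)) x
        = deriv (centralMomentPoly n (m + 1)) x / (m + 1).factorial := by
      rw [hfun, deriv_div_const]
    rw [← mul_right_inj' (Nat.cast_ne_zero.mpr hn), centralMomentPoly_add_two hn, ← ihm, theta]
    beta_reduce
    rw [hderiv, Nat.factorial_succ, Nat.factorial_succ]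
    push_cast
    field_simp
    ring

end Baskakov

/-- the m-th central moment of the Baskakov operator equals `m! θ_m^{(n)}(x)`. -/
theorem baskakov_central_moments (n : ℕ) (hn : 1 ≤ n) (m : ℕ) (x : ℝ) (hx : 0 ≤ x) :
    ∑' k : ℕ, ((k : ℝ) / n - x) ^ m * baskakovBasis n k x
      = (Nat.factorial m : ℝ) * theta n m x := by
  rw [Baskakov.factorial_mul_theta (by omega)]
  exact (Baskakov.hasSum_centralMomentPoly hn m hx).tsum_eq
end

section
/- For every integer s ≥ 1 and every real x ≥ 0 there exists a constant C > 0 such that for all integers n ≥ 1, the even central moments of the Baskakov operator satisfy Σ_{k=0}^∞ (k/n − x)^{2s}·v_{k,n}(x) ≤ C·n^{-s}; equivalently, Σ_{k=0}^∞ (k − nx)^{2s}·v_{k,n}(x) ≤ C·n^{s}. -/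
open Filter Topology Finset

/-! The weights `v_{k,n}(x)` form a negative binomial law: `∑ₖ v_{k,n}(x) zᵏ = (1 + x - x z)⁻ⁿ`.
Hence the centred exponential moment `∑ₖ v_{k,n}(x) e^{τ(k - nx)}` is
`(e^{-τx} / (1 + x - x e^τ))ⁿ`, and expanding `e^τ` to second order bounds the base by
`e^{8(1+x)²τ²}` when `|τ| ≤ 1/(8(1+x))`. Since `y^{2s} ≤ (2s)! (e^y + e^{-y})`, Chernoff's
method with `τ = ±1/(8(1+x)√n)` bounds `∑ₖ (k - nx)^{2s} v_{k,n}(x)` by a constant times `nˢ`. -/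

lemma baskakovBasis_nonneg (n k : ℕ) {x : ℝ} (hx : 0 ≤ x) : 0 ≤ baskakovBasis n k x := by
  unfold baskakovBasis
  positivity

lemma hasSum_baskakovBasis_mul_pow {n : ℕ} (hn : 1 ≤ n) {x z : ℝ} (hx : 0 ≤ x)
    (hxz : x * |z| < 1 + x) :
    HasSum (fun k : ℕ => baskakovBasis n k x * z ^ k) (1 / (1 + x - x * z) ^ n) := by
  have h1x : 0 < 1 + x := by linarith
  set r := x * z / (1 + x) with hr
  have hr1 : ‖r‖ < 1 := by
    rwa [hr, Real.norm_eq_abs, abs_div, abs_mul, abs_of_nonneg hx, abs_of_pos h1x,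
      div_lt_one h1x]
  have hterm : ∀ k : ℕ, ((k + (n - 1)).choose (n - 1) : ℝ) * r ^ k * (1 / (1 + x) ^ n) =
      baskakovBasis n k x * z ^ k := by
    intro k
    have hchoose : (k + (n - 1)).choose (n - 1) = (n + k - 1).choose k := by
      rw [show k + (n - 1) = n + k - 1 by omega, Nat.choose_symm_of_eq_add]
      omega
    rw [baskakovBasis, hchoose, hr, div_pow, mul_pow, pow_add]
    field_simp
  have hsum : 1 / (1 - r) ^ (n - 1 + 1) * (1 / (1 + x) ^ n) = 1 / (1 + x - x * z) ^ n := by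
    rw [show 1 + x - x * z = (1 - r) * (1 + x) by rw [hr]; field_simp, mul_pow,
      Nat.sub_add_cancel hn, div_mul_div_comm, one_mul]
  simpa only [hterm, hsum] using
    (hasSum_choose_mul_geometric_of_norm_lt_one (n - 1) hr1).mul_right (1 / (1 + x) ^ n)

lemma hasSum_baskakovBasis_mul_exp_centered {n : ℕ} (hn : 1 ≤ n) {x τ : ℝ} (hx : 0 ≤ x)
    (hτ : x * Real.exp τ < 1 + x) :
    HasSum (fun k : ℕ => baskakovBasis n k x * Real.exp (τ * (k - n * x)))
      ((Real.exp (-(τ * x)) / (1 + x - x * Real.exp τ)) ^ n) := by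
  have hterm : ∀ k : ℕ, baskakovBasis n k x * Real.exp τ ^ k * Real.exp (-(τ * x)) ^ n =
      baskakovBasis n k x * Real.exp (τ * (k - n * x)) := by
    intro k
    rw [← Real.exp_nat_mul, ← Real.exp_nat_mul, mul_assoc, ← Real.exp_add]
    ring_nf
  have hsum : 1 / (1 + x - x * Real.exp τ) ^ n * Real.exp (-(τ * x)) ^ n =
      (Real.exp (-(τ * x)) / (1 + x - x * Real.exp τ)) ^ n := by
    rw [div_pow]
    ring
  rw [← funext hterm, ← hsum]
  exact (hasSum_baskakovBasis_mul_pow hn hx (by rwa [abs_of_pos (Real.exp_pos τ)])).mul_right _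

lemma exp_neg_sub_two_mul_sq_le_one_sub {u : ℝ} (hu : u ≤ 1 / 2) :
    Real.exp (-u - 2 * u ^ 2) ≤ 1 - u := by
  have hpos : 0 < 1 + u + 2 * u ^ 2 := by nlinarith [sq_nonneg (u + 1 / 4)]
  calc Real.exp (-u - 2 * u ^ 2) = (Real.exp (u + 2 * u ^ 2))⁻¹ := by
        rw [← Real.exp_neg]; ring_nf
    _ ≤ (1 + u + 2 * u ^ 2)⁻¹ := by
        gcongr
        linarith [Real.add_one_le_exp (u + 2 * u ^ 2)]
    _ ≤ 1 - u := by
        rw [inv_le_iff_one_le_mul₀ hpos]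
        nlinarith [sq_nonneg u]

lemma exp_neg_mul_le_exp_sq_mul {x τ : ℝ} (hx : 0 ≤ x) (hτ : |τ| ≤ 1 / (8 * (1 + x))) :
    Real.exp (-(τ * x)) ≤ Real.exp (8 * (1 + x) ^ 2 * τ ^ 2) * (1 + x - x * Real.exp τ) := by
  have hxτ : (1 + x) * |τ| ≤ 1 / 8 := by
    rw [le_div_iff₀ (by positivity)] at hτ
    linarith
  have hτ1 : |τ| ≤ 1 := by nlinarith [abs_nonneg τ]
  -- The right factor is `1 - u`, and `u = τx + O(τ²)` with `u = O(τ)`.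
  set u := x * (Real.exp τ - 1) with hu
  have hu_abs : |u| ≤ x * (2 * |τ|) := by
    rw [hu, abs_mul, abs_of_nonneg hx]
    exact mul_le_mul_of_nonneg_left (Real.abs_exp_sub_one_le hτ1) hx
  have hu_sq : u ^ 2 ≤ 4 * x ^ 2 * τ ^ 2 := by
    have := sq_le_sq' (neg_le_of_abs_le hu_abs) (le_of_abs_le hu_abs)
    nlinarith [sq_abs τ]
  have hu_lin : u ≤ τ * x + x * τ ^ 2 := by
    have := mul_le_mul_of_nonneg_left
      (le_of_abs_le (Real.abs_exp_sub_one_sub_id_le hτ1)) hx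
    linarith
  have hu_half : u ≤ 1 / 2 := by nlinarith [le_of_abs_le hu_abs, abs_nonneg τ]
  calc Real.exp (-(τ * x))
      = Real.exp (8 * (1 + x) ^ 2 * τ ^ 2) * Real.exp (-(τ * x) - 8 * (1 + x) ^ 2 * τ ^ 2) := by
        rw [← Real.exp_add]; ring_nf
    _ ≤ Real.exp (8 * (1 + x) ^ 2 * τ ^ 2) * Real.exp (-u - 2 * u ^ 2) := by
        refine mul_le_mul_of_nonneg_left (Real.exp_le_exp.mpr ?_) (Real.exp_pos _).le
        nlinarith [mul_nonneg hx (sq_nonneg τ)]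
    _ ≤ Real.exp (8 * (1 + x) ^ 2 * τ ^ 2) * (1 + x - x * Real.exp τ) := by
        gcongr
        exact (exp_neg_sub_two_mul_sq_le_one_sub hu_half).trans_eq (by rw [hu]; ring)

lemma exists_hasSum_baskakovBasis_mul_exp_centered_le {n : ℕ} (hn : 1 ≤ n) {x τ : ℝ}
    (hx : 0 ≤ x) (hτ : |τ| ≤ 1 / (8 * (1 + x))) :
    ∃ m ≤ Real.exp (8 * (1 + x) ^ 2 * τ ^ 2 * n),
      HasSum (fun k : ℕ => baskakovBasis n k x * Real.exp (τ * (k - n * x))) m := by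
  have hbound := exp_neg_mul_le_exp_sq_mul hx hτ
  have hden : 0 < 1 + x - x * Real.exp τ :=
    pos_of_mul_pos_right ((Real.exp_pos _).trans_le hbound) (Real.exp_pos _).le
  refine ⟨_, ?_, hasSum_baskakovBasis_mul_exp_centered hn hx (by linarith)⟩
  rw [mul_comm _ (n : ℝ), Real.exp_nat_mul]
  gcongr
  rwa [div_le_iff₀ hden]

lemma even_pow_le_factorial_mul_exp_add_exp_neg (s : ℕ) (y : ℝ) :
    y ^ (2 * s) ≤ (2 * s).factorial * (Real.exp y + Real.exp (-y)) := by
  have habs : |y| ^ (2 * s) / (2 * s).factorial ≤ Real.exp y + Real.exp (-y) := by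
    refine (Real.pow_div_factorial_le_exp _ (abs_nonneg y) _).trans ?_
    rcases abs_cases y with ⟨h, -⟩ | ⟨h, -⟩ <;> rw [h] <;>
      linarith [Real.exp_pos y, Real.exp_pos (-y)]
  rw [div_le_iff₀ (by positivity), pow_mul, sq_abs, ← pow_mul] at habs
  linarith

lemma tsum_sub_mul_pow_mul_baskakovBasis_le (s : ℕ) {n : ℕ} (hn : 1 ≤ n) {x t : ℝ} (hx : 0 ≤ x)
    (ht : 0 < t) (ht' : t ≤ 1 / (8 * (1 + x))) :
    ∑' k : ℕ, ((k : ℝ) - n * x) ^ (2 * s) * baskakovBasis n k x ≤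
      2 * (2 * s).factorial / t ^ (2 * s) * Real.exp (8 * (1 + x) ^ 2 * t ^ 2 * n) := by
  obtain ⟨m₁, hm₁, h₁⟩ :=
    exists_hasSum_baskakovBasis_mul_exp_centered_le hn hx (τ := t) (by rwa [abs_of_pos ht])
  obtain ⟨m₂, hm₂, h₂⟩ :=
    exists_hasSum_baskakovBasis_mul_exp_centered_le hn hx (τ := -t)
      (by rwa [abs_neg, abs_of_pos ht])
  rw [neg_sq] at hm₂
  set c : ℝ := (2 * s).factorial / t ^ (2 * s)
  have hsum := (h₁.add h₂).mul_left c
  have hle : ∀ k : ℕ, ((k : ℝ) - n * x) ^ (2 * s) * baskakovBasis n k x ≤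
      c * (baskakovBasis n k x * Real.exp (t * (k - n * x)) +
        baskakovBasis n k x * Real.exp (-t * (k - n * x))) := by
    intro k
    have hpow : ((k : ℝ) - n * x) ^ (2 * s) ≤
        c * (Real.exp (t * (k - n * x)) + Real.exp (-(t * (k - n * x)))) := by
      rw [div_mul_eq_mul_div, le_div_iff₀ (by positivity), mul_comm, ← mul_pow]
      exact even_pow_le_factorial_mul_exp_add_exp_neg s _
    calc ((k : ℝ) - n * x) ^ (2 * s) * baskakovBasis n k x
        ≤ c * (Real.exp (t * (k - n * x)) + Real.exp (-(t * (k - n * x)))) *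
            baskakovBasis n k x :=
          mul_le_mul_of_nonneg_right hpow (baskakovBasis_nonneg n k hx)
      _ = _ := by rw [neg_mul]; ring
  have hnonneg : ∀ k : ℕ, 0 ≤ ((k : ℝ) - n * x) ^ (2 * s) * baskakovBasis n k x :=
    fun k => mul_nonneg (by rw [pow_mul]; positivity) (baskakovBasis_nonneg n k hx)
  calc _ ≤ c * (m₁ + m₂) :=
        hasSum_le hle (Summable.of_nonneg_of_le hnonneg hle hsum.summable).hasSum hsum
    _ ≤ c * (2 * Real.exp (8 * (1 + x) ^ 2 * t ^ 2 * n)) := by gcongr; linarith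
    _ = _ := by ring

lemma tsum_sub_mul_pow_mul_baskakovBasis_le_mul_pow (s : ℕ) {n : ℕ} (hn : 1 ≤ n) {x : ℝ}
    (hx : 0 ≤ x) :
    ∑' k : ℕ, ((k : ℝ) - n * x) ^ (2 * s) * baskakovBasis n k x ≤
      2 * (2 * s).factorial * (8 * (1 + x)) ^ (2 * s) * Real.exp (1 / 8) * n ^ s := by
  have hn0 : (0 : ℝ) < n := by exact_mod_cast hn
  have ht' : 1 / (8 * (1 + x) * √n) ≤ 1 / (8 * (1 + x)) :=
    one_div_le_one_div_of_le (by positivity)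
      (le_mul_of_one_le_right (by positivity) (Real.one_le_sqrt.mpr (by exact_mod_cast hn)))
  refine (tsum_sub_mul_pow_mul_baskakovBasis_le s hn hx (by positivity) ht').trans_eq ?_
  have ht2 : (1 / (8 * (1 + x) * √n)) ^ 2 = 1 / ((8 * (1 + x)) ^ 2 * n) := by
    rw [div_pow, mul_pow, Real.sq_sqrt hn0.le, one_pow]
  have hexp : 8 * (1 + x) ^ 2 * (1 / ((8 * (1 + x)) ^ 2 * n)) * n = 1 / 8 := by
    field_simp
  rw [pow_mul, pow_mul, ht2, hexp, one_div, inv_pow, div_inv_eq_mul, mul_pow]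
  ring

theorem baskakov_even_central_moments_bound_general (s : ℕ) (x : ℝ) (hx : 0 ≤ x) :
    ∃ C : ℝ, 0 < C ∧ ∀ n : ℕ, 1 ≤ n →
      (∑' k : ℕ, ((k : ℝ) / n - x) ^ (2 * s) * baskakovBasis n k x ≤ C / (n : ℝ) ^ s) ∧
      (∑' k : ℕ, ((k : ℝ) - n * x) ^ (2 * s) * baskakovBasis n k x ≤ C * (n : ℝ) ^ s) := by
  refine ⟨2 * (2 * s).factorial * (8 * (1 + x)) ^ (2 * s) * Real.exp (1 / 8), by positivity,
    fun n hn => ?_⟩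
  have hmoment := tsum_sub_mul_pow_mul_baskakovBasis_le_mul_pow s hn hx
  refine ⟨?_, hmoment⟩
  have hn0 : (0 : ℝ) < n := by exact_mod_cast hn
  have hscale : ∀ k : ℕ, ((k : ℝ) / n - x) ^ (2 * s) * baskakovBasis n k x =
      ((k : ℝ) - n * x) ^ (2 * s) * baskakovBasis n k x / (n : ℝ) ^ s / (n : ℝ) ^ s := by
    intro k
    rw [div_div, ← pow_add, ← two_mul, show (k : ℝ) / n - x = (k - n * x) / n by field_simp,
      div_pow]
    ring
  simp_rw [hscale, tsum_div_const]
  gcongr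
  rwa [div_le_iff₀ (by positivity)]

/-- the even central moments of the Baskakov operator are `O(n^{-s})`. -/
theorem baskakov_even_central_moments_bound (s : ℕ) (hs : 1 ≤ s) (x : ℝ) (hx : 0 ≤ x) :
    ∃ C : ℝ, 0 < C ∧ ∀ n : ℕ, 1 ≤ n →
      (∑' k : ℕ, ((k : ℝ) / n - x) ^ (2 * s) * baskakovBasis n k x ≤ C / (n : ℝ) ^ s) ∧
      (∑' k : ℕ, ((k : ℝ) - n * x) ^ (2 * s) * baskakovBasis n k x ≤ C * (n : ℝ) ^ s) :=
  baskakov_even_central_moments_bound_general s x hx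
end

section
/- Let p, j, n, k be integers with 0 ≤ j ≤ p, n > p and k ≥ 0. Then for every real x ≥ 0, x^j·(1+x)^{p-j}·v_{k,n}(x) = ω_{p,j}(n,k)·v_{k+j,n-p}(x), where ω_{p,j}(n,k) = [ (n+k-1)(n+k-2)⋯(n+k-p+j) · (k+1)(k+2)⋯(k+j) ] / [ (n-1)(n-2)⋯(n-p) ]. -/
open Filter Topology Finset

/-! The numerators of `ω_{p,j}(n,k)` are the falling factorial `(n+k-1)^{\underline{p-j}}` and the
rising factorial `(k+1)^{\overline{j}}`, its denominator is `(n-1)^{\underline{p}}`, and in terms of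
factorials `ω_{p,j}(n,k) = C(n+k-1, k) / C(n-p+k+j-1, k+j)`. Since moreover
`(1+x)^{n+k} = (1+x)^{p-j} (1+x)^{n-p+k+j}`, the identity is a cancellation. Writing `p = j + q` and
`n = p + N + 1` removes all truncated subtractions. -/

open Nat in
theorem Nat.choose_mul_descFactorial_eq (N q j k : ℕ) :
    (N + q + j + k).choose k * (N + q + j).descFactorial (q + j) =
      (N + q + j + k).descFactorial q * (k + 1).ascFactorial j * (N + j + k).choose (j + k) := by
  -- after multiplying by `k! N!`, both sides are `(N + q + j + k)!`
  refine Nat.eq_of_mul_eq_mul_right (mul_pos (factorial_pos k) (factorial_pos N)) ?_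
  have hchooseL : (N + q + j + k).choose k * k ! * (N + q + j)! = (N + q + j + k)! := by
    simpa using choose_mul_factorial_mul_factorial (Nat.le_add_left k (N + q + j))
  have hchooseR : (N + j + k).choose (j + k) * (j + k)! * N ! = (N + j + k)! := by
    simpa [add_assoc] using choose_mul_factorial_mul_factorial (Nat.le_add_left (j + k) N)
  have hdescL : (N + j + k)! * (N + q + j + k).descFactorial q = (N + q + j + k)! := by
    have h := factorial_mul_descFactorial (Nat.le_add_left q (N + j + k))
    rwa [Nat.add_sub_cancel, show N + j + k + q = N + q + j + k by ring] at h
  have hdescR : N ! * (N + q + j).descFactorial (q + j) = (N + q + j)! := by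
    simpa [add_assoc] using factorial_mul_descFactorial (Nat.le_add_left (q + j) N)
  have hasc : k ! * (k + 1).ascFactorial j = (j + k)! := by
    rw [factorial_mul_ascFactorial, add_comm]
  calc _ = (N + q + j + k).choose k * k ! * (N ! * (N + q + j).descFactorial (q + j)) := by ring
    _ = (N + j + k).choose (j + k) * (k ! * (k + 1).ascFactorial j) * N ! *
          (N + q + j + k).descFactorial q := by rw [hdescR, hchooseL, hasc, hchooseR, hdescL]
    _ = _ := by ring

theorem baskakovBasis_mul_eq (N q j k : ℕ) (x : ℝ) :
    x ^ j * (1 + x) ^ q * baskakovBasis (N + q + j + 1) k x =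
      ((N + q + j + k).descFactorial q * (k + 1).ascFactorial j /
          (N + q + j).descFactorial (q + j) : ℝ) *
        baskakovBasis (N + 1) (j + k) x := by
  have hchoose : ((N + q + j + k).choose k : ℝ) =
      (N + q + j + k).descFactorial q * (k + 1).ascFactorial j /
          (N + q + j).descFactorial (q + j) * (N + j + k).choose (j + k) := by
    have hD : ((N + q + j).descFactorial (q + j) : ℝ) ≠ 0 := by
      exact_mod_cast (Nat.descFactorial_pos.mpr (by omega)).ne'
    rw [div_mul_eq_mul_div, eq_div_iff hD]
    exact_mod_cast Nat.choose_mul_descFactorial_eq N q j k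
  unfold baskakovBasis
  rw [show N + q + j + 1 + k - 1 = N + q + j + k by omega,
    show N + 1 + (j + k) - 1 = N + j + k by omega, hchoose]
  rcases eq_or_ne (1 + x) 0 with h | h
  · -- at `x = -1` both sides are `_ / 0 = 0`
    simp [h]
  · field_simp
    ring

theorem baskakov_basis_multiplication_general (p j n k : ℕ) (hj : j ≤ p) (hn : p < n)
    (x : ℝ) :
    x ^ j * (1 + x) ^ (p - j) * baskakovBasis n k x
      = ((∏ i ∈ Finset.range (p - j), ((n : ℝ) + k - 1 - i)) *
          (∏ i ∈ Finset.range j, ((k : ℝ) + 1 + i)) /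
          ∏ i ∈ Finset.range p, ((n : ℝ) - 1 - i)) *
        baskakovBasis (n - p) (k + j) x := by
  obtain ⟨q, rfl⟩ := Nat.exists_eq_add_of_le hj
  obtain ⟨N, rfl⟩ := Nat.exists_eq_add_of_lt hn
  have hnum : ∏ i ∈ range q, ((↑(j + q + N + 1) : ℝ) + k - 1 - i) =
      (N + q + j + k).descFactorial q := by
    rw [Nat.descFactorial_eq_prod_range, ← prod_range_natCast_sub]
    exact prod_congr rfl fun i _ ↦ by push_cast; ring
  have hden : ∏ i ∈ range (j + q), ((↑(j + q + N + 1) : ℝ) - 1 - i) =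
      (N + q + j).descFactorial (q + j) := by
    rw [Nat.descFactorial_eq_prod_range, ← prod_range_natCast_sub, add_comm q j]
    exact prod_congr rfl fun i _ ↦ by push_cast; ring
  have hasc : ∏ i ∈ range j, ((k : ℝ) + 1 + i) = (k + 1).ascFactorial j := by
    rw [Nat.ascFactorial_eq_prod_range]
    push_cast
    rfl
  rw [Nat.add_sub_cancel_left, hnum, hasc, hden,
    show j + q + N + 1 - (j + q) = N + 1 by omega, add_comm k j,
    show j + q + N + 1 = N + q + j + 1 by ring]
  exact baskakovBasis_mul_eq N q j k x

/-- `x^j (1+x)^{p-j} v_{k,n}(x) = ω_{p,j}(n,k) v_{k+j,n-p}(x)`. -/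
theorem baskakov_basis_multiplication (p j n k : ℕ) (hj : j ≤ p) (hn : p < n)
    (x : ℝ) (hx : 0 ≤ x) :
    x ^ j * (1 + x) ^ (p - j) * baskakovBasis n k x
      = ((∏ i ∈ Finset.range (p - j), ((n : ℝ) + k - 1 - i)) *
          (∏ i ∈ Finset.range j, ((k : ℝ) + 1 + i)) /
          ∏ i ∈ Finset.range p, ((n : ℝ) - 1 - i)) *
        baskakovBasis (n - p) (k + j) x :=
  baskakov_basis_multiplication_general p j n k hj hn x
end

section
/- Let n ≥ 1 and p ≥ 0 be integers and let f : [0,∞) → ℝ be bounded. Then for every real x > 0, the function V_n f is p-times differentiable at x and D^p (V_n f)(x) = (n)_p·Σ_{k=0}^∞ (Δ^p f)_k·v_{k,n+p}(x), where (Δ^p f)_k = Σ_{i=0}^{p} (−1)^{p-i}·binom(p,i)·f((k+i)/n) and (n)_p = n(n+1)⋯(n+p-1) is the rising factorial. -/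
open Filter Topology Finset

lemma baskakovBasis_le (n k : ℕ) {x b : ℝ} (hx : 0 ≤ x) (hxb : x ≤ b) :
    baskakovBasis n k x ≤ (k + n).choose n * (b / (1 + b)) ^ k := by
  have hchoose : ((n + k - 1).choose k : ℝ) ≤ (k + n).choose n := by
    rw [← Nat.choose_symm_add, add_comm k n]
    exact_mod_cast Nat.choose_le_choose k (Nat.sub_le _ _)
  have hratio : x / (1 + x) ≤ b / (1 + b) := by
    rw [div_le_div_iff₀ (by linarith) (by linarith)]; linarith
  have hpow : x ^ k / (1 + x) ^ (n + k) ≤ (x / (1 + x)) ^ k := by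
    rw [add_comm n k, pow_add, ← div_div, div_pow]
    exact div_le_self (by positivity) (one_le_pow₀ (by linarith))
  rw [baskakovBasis, mul_div_assoc]
  exact mul_le_mul hchoose (hpow.trans (pow_le_pow_left₀ (by positivity) hratio k))
    (by positivity) (by positivity)

lemma summable_mul_baskakovBasis (n : ℕ) {g : ℕ → ℝ} {M : ℝ} (hg : ∀ k, |g k| ≤ M)
    {x : ℝ} (hx : 0 ≤ x) : Summable fun k => g k * baskakovBasis n k x := by
  have hq : ‖x / (1 + x)‖ < 1 := by
    rw [Real.norm_of_nonneg (by positivity), div_lt_one (by linarith)]; linarith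
  refine Summable.of_norm_bounded
    ((summable_choose_mul_geometric_of_norm_lt_one n hq).mul_left M) fun k => ?_
  rw [Real.norm_eq_abs, abs_mul, abs_of_nonneg (baskakovBasis_nonneg n k hx)]
  exact mul_le_mul (hg k) (baskakovBasis_le n k hx le_rfl) (baskakovBasis_nonneg n k hx)
    ((abs_nonneg _).trans (hg k))

lemma hasDerivAt_baskakovBasis_zero (n : ℕ) {y : ℝ} (hy : 1 + y ≠ 0) :
    HasDerivAt (baskakovBasis n 0) (-(n * baskakovBasis (n + 1) 0 y)) y := by
  have hd := (((hasDerivAt_id y).const_add 1).pow n).inv (pow_ne_zero n hy)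
  have hv : baskakovBasis n 0 = fun y => ((1 + y) ^ n)⁻¹ := by
    funext y; simp [baskakovBasis]
  rw [hv]
  refine hd.congr_deriv ?_
  simp only [baskakovBasis, Nat.choose_zero_right, pow_zero, id]
  rcases n with _ | m
  · simp
  · simp only [Pi.pow_apply, Nat.add_sub_cancel, pow_succ]
    field_simp
    push_cast
    ring

lemma hasDerivAt_baskakovBasis_succ (n j : ℕ) {y : ℝ} (hy : 1 + y ≠ 0) :
    HasDerivAt (baskakovBasis n (j + 1))
      (n * (baskakovBasis (n + 1) j y - baskakovBasis (n + 1) (j + 1) y)) y := by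
  have hlow : ((j : ℝ) + 1) * (n + j).choose (j + 1) = n * (n + j).choose j := by
    have := Nat.choose_succ_right_eq (n + j) j
    rw [Nat.add_sub_cancel] at this
    exact_mod_cast (mul_comm _ _).trans (this.trans (mul_comm _ _))
  have hup : ((n : ℝ) + j + 1) * (n + j).choose (j + 1) = n * (n + j + 1).choose (j + 1) := by
    have := Nat.choose_mul_succ_eq (n + j) (j + 1)
    rw [show n + j + 1 - (j + 1) = n by omega] at this
    exact_mod_cast (mul_comm _ _).trans (this.trans (mul_comm _ _))
  have hd := (((hasDerivAt_pow (j + 1) y).const_mul ((n + j).choose (j + 1) : ℝ)).div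
    (((hasDerivAt_id y).const_add 1).pow (n + (j + 1))) (pow_ne_zero _ hy))
  unfold baskakovBasis
  simp only [Nat.add_succ_sub_one, show n + 1 + j - 1 = n + j by omega] at hd ⊢
  refine hd.congr_deriv ?_
  rw [show n + 1 + j = n + j + 1 by omega, show n + 1 + (j + 1) = n + j + 1 + 1 by omega,
    show n + (j + 1) = n + j + 1 by omega]
  simp only [Pi.pow_apply, id, add_zero, pow_succ]
  push_cast
  field_simp
  linear_combination y ^ j * (1 + y) * hlow - y ^ j * y * hup

noncomputable def baskakovSeries (n : ℕ) (g : ℕ → ℝ) (x : ℝ) : ℝ :=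
  ∑' k : ℕ, g k * baskakovBasis n k x

lemma hasDerivAt_tsum_mul_baskakovBasis_succ (n : ℕ) {g : ℕ → ℝ} {M : ℝ}
    (hg : ∀ k, |g k| ≤ M) {x : ℝ} (hx : 0 < x) :
    HasDerivAt (fun y => ∑' k, g (k + 1) * baskakovBasis n (k + 1) y)
      (∑' k, g (k + 1) * (n * (baskakovBasis (n + 1) k x - baskakovBasis (n + 1) (k + 1) x))) x := by
  have hM : 0 ≤ M := (abs_nonneg _).trans (hg 0)
  -- on `(0, x + 1)` every `baskakovBasis (n + 1) k` is dominated by `U k`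
  set q : ℝ := (x + 1) / (1 + (x + 1))
  set U : ℕ → ℝ := fun k => (k + (n + 1)).choose (n + 1) * q ^ k
  have hU : Summable U :=
    summable_choose_mul_geometric_of_norm_lt_one (n + 1)
      (by rw [Real.norm_of_nonneg (by positivity), div_lt_one (by linarith)]; linarith)
  have hbound : ∀ k, ∀ y ∈ Set.Ioo 0 (x + 1),
      ‖g (k + 1) * (n * (baskakovBasis (n + 1) k y - baskakovBasis (n + 1) (k + 1) y))‖
        ≤ M * n * (U k + U (k + 1)) := by
    rintro k y ⟨hy0, hyb⟩
    have hU_ge : ∀ i, |baskakovBasis (n + 1) i y| ≤ U i := fun i => by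
      rw [abs_of_nonneg (baskakovBasis_nonneg _ _ hy0.le)]
      exact baskakovBasis_le _ _ hy0.le hyb.le
    rw [Real.norm_eq_abs, abs_mul, abs_mul, Nat.abs_cast, ← mul_assoc]
    refine mul_le_mul (mul_le_mul_of_nonneg_right (hg (k + 1)) n.cast_nonneg) ?_ (abs_nonneg _)
      (by positivity)
    exact (abs_sub _ _).trans (add_le_add (hU_ge k) (hU_ge (k + 1)))
  exact hasDerivAt_tsum_of_isPreconnected (g := fun k y => g (k + 1) * baskakovBasis n (k + 1) y)
    ((hU.add ((summable_nat_add_iff 1).2 hU)).mul_left (M * n)) isOpen_Ioo isPreconnected_Ioo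
    (fun k y hy => (hasDerivAt_baskakovBasis_succ n k (by linarith [hy.1])).const_mul _)
    hbound ⟨hx, by linarith⟩ ((summable_nat_add_iff 1).2 (summable_mul_baskakovBasis n hg hx.le))
    ⟨hx, by linarith⟩

lemma hasDerivAt_baskakovSeries (n : ℕ) {g : ℕ → ℝ} {M : ℝ} (hg : ∀ k, |g k| ≤ M)
    {x : ℝ} (hx : 0 < x) :
    HasDerivAt (baskakovSeries n g) (n * baskakovSeries (n + 1) (fwdDiff 1 g) x) x := by
  have hg' : ∀ k, |g (k + 1)| ≤ M := fun k => hg (k + 1)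
  have hsplit : baskakovSeries n g =ᶠ[𝓝 x]
      fun y => g 0 * baskakovBasis n 0 y + ∑' k, g (k + 1) * baskakovBasis n (k + 1) y := by
    filter_upwards [Ioi_mem_nhds hx] with y hy
    exact (summable_mul_baskakovBasis n hg (le_of_lt hy)).tsum_eq_zero_add
  have hhead := (hasDerivAt_baskakovBasis_zero n (by linarith : 1 + x ≠ 0)).const_mul (g 0)
  refine ((hhead.add (hasDerivAt_tsum_mul_baskakovBasis_succ n hg hx)).congr_of_eventuallyEq
    hsplit).congr_deriv ?_
  -- summation by parts
  set w : ℕ → ℝ := fun k => baskakovBasis (n + 1) k x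
  have hs₀ : Summable fun k => g k * w k := summable_mul_baskakovBasis (n + 1) hg hx.le
  have hs₁ : Summable fun k => g (k + 1) * w k := summable_mul_baskakovBasis (n + 1) hg' hx.le
  have hs₂ : Summable fun k => g (k + 1) * w (k + 1) := (summable_nat_add_iff 1).2 hs₀
  have hdiff : baskakovSeries (n + 1) (fwdDiff 1 g) x
      = ∑' k, g (k + 1) * w k - (g 0 * w 0 + ∑' k, g (k + 1) * w (k + 1)) := by
    rw [← hs₀.tsum_eq_zero_add, ← hs₁.tsum_sub hs₀]
    simp only [baskakovSeries, fwdDiff, sub_mul, w]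
  have htail : ∑' k, g (k + 1) * (n * (w k - w (k + 1)))
      = n * (∑' k, g (k + 1) * w k - ∑' k, g (k + 1) * w (k + 1)) := by
    rw [← hs₁.tsum_sub hs₂, ← tsum_mul_left]
    exact tsum_congr fun k => by ring
  rw [hdiff, htail]
  ring

lemma abs_fwdDiff_iterate_le {g : ℕ → ℝ} {M : ℝ} (hg : ∀ k, |g k| ≤ M) (p k : ℕ) :
    |(fwdDiff 1)^[p] g k| ≤ 2 ^ p * M := by
  induction p generalizing k with
  | zero => simpa using hg k
  | succ p ih =>
    rw [Function.iterate_succ_apply', fwdDiff, pow_succ]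
    linarith [abs_sub ((fwdDiff 1)^[p] g (k + 1)) ((fwdDiff 1)^[p] g k), ih k, ih (k + 1)]

lemma risingFactorial_succ (n p : ℕ) : risingFactorial n (p + 1) = risingFactorial n p * (n + p) :=
  prod_range_succ _ _

lemma iteratedDeriv_baskakovSeries (n p : ℕ) {g : ℕ → ℝ} {M : ℝ} (hg : ∀ k, |g k| ≤ M) :
    Set.EqOn (iteratedDeriv p (baskakovSeries n g))
      (fun x => risingFactorial n p * baskakovSeries (n + p) ((fwdDiff 1)^[p] g) x)
      (Set.Ioi 0) := by
  induction p with
  | zero => intro x _; simp [risingFactorial]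
  | succ p ih =>
    intro x hx
    have hd := (hasDerivAt_baskakovSeries (n + p) (abs_fwdDiff_iterate_le hg p) hx).const_mul
      (risingFactorial n p : ℝ)
    rw [iteratedDeriv_succ, (ih.eventuallyEq_of_mem (Ioi_mem_nhds hx)).deriv_eq, hd.deriv,
      Function.iterate_succ_apply', risingFactorial_succ, ← add_assoc]
    push_cast
    ring

open scoped ContDiff in
lemma contDiffOn_baskakovSeries (n : ℕ) {g : ℕ → ℝ} {M : ℝ} (hg : ∀ k, |g k| ≤ M) :
    ContDiffOn ℝ ∞ (baskakovSeries n g) (Set.Ioi 0) := by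
  refine contDiffOn_of_differentiableOn_deriv fun m _ => ?_
  refine DifferentiableOn.congr (fun x hx => ?_)
    ((iteratedDerivWithin_of_isOpen isOpen_Ioi).trans (iteratedDeriv_baskakovSeries n m hg))
  exact ((hasDerivAt_baskakovSeries (n + m) (abs_fwdDiff_iterate_le hg m) hx).differentiableAt
    |>.const_mul _).differentiableWithinAt

theorem baskakov_derivative_formula_general (n p : ℕ) (f : ℝ → ℝ)
    (hf : ∃ M : ℝ, ∀ t : ℝ, 0 ≤ t → |f t| ≤ M) (x : ℝ) (hx : 0 < x) :
    ContDiffAt ℝ p (baskakov n f) x ∧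
    iteratedDeriv p (baskakov n f) x
      = (risingFactorial n p : ℝ) *
          ∑' k : ℕ,
            (∑ i ∈ Finset.range (p + 1),
              (-1 : ℝ) ^ (p - i) * (Nat.choose p i : ℝ) * f (((k : ℝ) + i) / n)) *
            baskakovBasis (n + p) k x := by
  obtain ⟨M, hM⟩ := hf
  have hg : ∀ k : ℕ, |f (k / n)| ≤ M := fun k => hM _ (by positivity)
  have hV : baskakov n f = baskakovSeries n fun k => f (k / n) := rfl
  refine ⟨hV ▸ ((contDiffOn_baskakovSeries n hg).contDiffAt (Ioi_mem_nhds hx)).of_le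
    (by exact_mod_cast le_top), ?_⟩
  rw [hV, iteratedDeriv_baskakovSeries n p hg hx]
  dsimp only [baskakovSeries]
  congr 2 with k
  rw [fwdDiff_iter_eq_sum_shift]
  refine congrArg₂ _ (sum_congr rfl fun i _ => ?_) rfl
  push_cast
  simp [zsmul_eq_mul]

/-- for bounded `f`, `V_n f` is `p`-times differentiable on `(0,∞)` and
`D^p (V_n f)(x) = (n)_p Σ_k (Δ^p f)_k v_{k,n+p}(x)`. -/
theorem baskakov_derivative_formula (n p : ℕ) (hn : 1 ≤ n) (f : ℝ → ℝ)
    (hf : ∃ M : ℝ, ∀ t : ℝ, 0 ≤ t → |f t| ≤ M) (x : ℝ) (hx : 0 < x) :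
    ContDiffAt ℝ p (baskakov n f) x ∧
    iteratedDeriv p (baskakov n f) x
      = (risingFactorial n p : ℝ) *
          ∑' k : ℕ,
            (∑ i ∈ Finset.range (p + 1),
              (-1 : ℝ) ^ (p - i) * (Nat.choose p i : ℝ) * f (((k : ℝ) + i) / n)) *
            baskakovBasis (n + p) k x :=
  baskakov_derivative_formula_general n p f hf x hx
end
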